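/- An Abelian median group G is an A-group if and only if G is an A₁-group and x ∩ x⁻¹ = 1 (equivalently x ⊂ x²) for all x ∈ G. -/
import Mathlib


namespace ArtinMedian

/-- A median group, presented via a meet-semilattice operation `∩` (with induced
order `x ⊂ y ↔ x ∩ y = x`) satisfying: (1) `1 ⊂ x`; (2) `x ⊂ y → y ⊂ z →
z⁻¹y ⊂ z⁻¹x`; (3) `x⁻¹(x ∩ y) ⊂ x⁻¹y`. -/
class MedianGroup (G : Type*) extends Group G where
  meet : G → G → G
  meet_comm : ∀ x y, meet x y = meet y x
  meet_assoc : ∀ x y z, meet (meet x y) z = meet x (meet y z)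
  meet_idem : ∀ x, meet x x = x
  one_meet : ∀ x, meet 1 x = 1
  inv_mul_antitone : ∀ x y z, meet x y = x → meet y z = y →
    meet (z⁻¹ * y) (z⁻¹ * x) = z⁻¹ * y
  meet_axiom : ∀ x y, meet (x⁻¹ * meet x y) (x⁻¹ * y) = x⁻¹ * meet x y

namespace MedianGroup

variable {G : Type*} [MedianGroup G]

/-- The order `x ⊂ y` of a median group. -/
def sub (x y : G) : Prop := meet x y = x

/-- `j` is the join (least upper bound) `x ∪ y`. -/
def isJoin (x y j : G) : Prop :=
  sub x j ∧ sub y j ∧ ∀ c, sub x c → sub y c → sub j c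

/-- The join `x ∪ y` exists (`x ∪ y ≠ ∞`). -/
def hasJoin (x y : G) : Prop := ∃ j, isJoin x y j

/-- Orthogonality: `x ⊥ y` iff `x ∩ y = 1` and `x ∪ y` exists. -/
def orth (x y : G) : Prop := meet x y = 1 ∧ hasJoin x y

/-- `G` is a `⊥`-group: `x ⊥ y` implies `x ∪ y = xy`. -/
def PerpGroup (G : Type*) [MedianGroup G] : Prop :=
  ∀ x y : G, orth x y → isJoin x y (x * y)

/-- Axiom A₁: `x ∪ y` exists and `x⁻¹ ⊂ y⁻¹` imply `x ⊂ y`. -/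
def A1 (G : Type*) [MedianGroup G] : Prop :=
  ∀ x y : G, hasJoin x y → sub x⁻¹ y⁻¹ → sub x y

/-- Axiom A₂: `x ∩ y = x⁻¹ ∩ z = y⁻¹ ∩ z = 1` imply `xz ∩ yz ⊂ z`. -/
def A2 (G : Type*) [MedianGroup G] : Prop :=
  ∀ x y z : G, meet x y = 1 → meet x⁻¹ z = 1 → meet y⁻¹ z = 1 →
    sub (meet (x * z) (y * z)) z

/-- Axiom A₄: if `x ∪ x⁻¹` exists then `x = 1`. -/
def A4 (G : Type*) [MedianGroup G] : Prop :=
  ∀ x : G, hasJoin x x⁻¹ → x = 1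

/-- An A-group: a `⊥`-group satisfying A₁, A₂ and A₄. -/
def AGroup (G : Type*) [MedianGroup G] : Prop :=
  PerpGroup G ∧ A1 G ∧ A2 G ∧ A4 G

/-- The median of a median group: `Y(x,y,z) = x·((x⁻¹y) ∩ (x⁻¹z))`. -/
def medY (x y z : G) : G := x * meet (x⁻¹ * y) (x⁻¹ * z)

/-- The interval (cell) `[x,y]` of a median group. -/
def interval (x y : G) : Set G := {z | sub (x⁻¹ * z) (x⁻¹ * y)}

/-- Convexity of a subset of a median group. -/
def IsConvex (C : Set G) : Prop :=
  ∀ x y z : G, x ∈ C → y ∈ C → medY x z y ∈ C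


section Lemma311Aux

lemma sub_refl' (x : G) : sub x x := meet_idem x

lemma sub_trans' {x y z : G} (h1 : sub x y) (h2 : sub y z) : sub x z := by
  unfold sub at *
  rw [← h1, meet_assoc, h2]

lemma sub_antisymm' {x y : G} (h1 : sub x y) (h2 : sub y x) : x = y := by
  unfold sub at *
  rw [← h1, meet_comm]
  exact h2

lemma one_sub' (x : G) : sub 1 x := one_meet x

lemma sub_one' {x : G} (h : sub x 1) : x = 1 := by
  unfold sub at h
  calc x = meet x 1 := h.symm
    _ = meet 1 x := meet_comm _ _
    _ = 1 := one_meet x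

lemma meet_sub_left' (x y : G) : sub (meet x y) x := by
  unfold sub
  rw [meet_comm (meet x y) x, ← meet_assoc, meet_idem]

lemma meet_sub_right' (x y : G) : sub (meet x y) y := by
  unfold sub
  rw [meet_assoc, meet_idem]

lemma sub_meet' {t x y : G} (hx : sub t x) (hy : sub t y) : sub t (meet x y) := by
  unfold sub at *
  rw [← meet_assoc, hx, hy]

/-- Axiom (2) as a lemma. -/
lemma m2 {a b c : G} (h1 : sub a b) (h2 : sub b c) : sub (c⁻¹ * b) (c⁻¹ * a) :=
  inv_mul_antitone a b c h1 h2

/-- `y ⊂ z → z⁻¹y ⊂ z⁻¹`. -/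
lemma l1 {y z : G} (h : sub y z) : sub (z⁻¹ * y) z⁻¹ := by
  have h0 := m2 (one_sub' y) h
  rwa [mul_one] at h0

/-- `t ⊂ z⁻¹ → zt ⊂ z`. -/
lemma phi {t z : G} (h : sub t z⁻¹) : sub (z * t) z := by
  have h0 := l1 h
  rwa [inv_inv] at h0

/-- `p ∩ q = 1 → p⁻¹ ⊂ p⁻¹q`. -/
lemma l3 {p q : G} (h : meet p q = 1) : sub p⁻¹ (p⁻¹ * q) := by
  have h0 := meet_axiom p q
  rw [h, mul_one] at h0
  exact h0

/-- `w ⊂ z → w⁻¹ ∩ (w⁻¹z) = 1`. -/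
lemma g1 {w z : G} (h : sub w z) : meet w⁻¹ (w⁻¹ * z) = 1 := by
  have h1 : sub (meet w⁻¹ (w⁻¹ * z)) w⁻¹ := meet_sub_left' _ _
  have h2 : sub (meet w⁻¹ (w⁻¹ * z)) (w⁻¹ * z) := meet_sub_right' _ _
  have h3 : sub (w * meet w⁻¹ (w⁻¹ * z)) w := phi h1
  have h4 := l1 h2
  rw [mul_inv_rev, inv_inv] at h4
  have h5 := l1 h
  have h6 := m2 h4 h5
  rw [inv_inv] at h6
  rw [show z * (z⁻¹ * w) = w from by group] at h6
  rw [show z * (z⁻¹ * w * meet w⁻¹ (w⁻¹ * z)) = w * meet w⁻¹ (w⁻¹ * z) from by group] at h6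
  have h7 := sub_antisymm' h6 h3
  have h8 : w * meet w⁻¹ (w⁻¹ * z) = w * 1 := by rw [← h7, mul_one]
  exact mul_left_cancel h8

/-- Pairs bounded above have a join, and it is `c·((c⁻¹x) ∩ (c⁻¹y))`. -/
lemma bounded_isJoin {x y c : G} (hx : sub x c) (hy : sub y c) :
    isJoin x y (c * meet (c⁻¹ * x) (c⁻¹ * y)) := by
  have hml : sub (meet (c⁻¹ * x) (c⁻¹ * y)) (c⁻¹ * x) := meet_sub_left' _ _
  have hmr : sub (meet (c⁻¹ * x) (c⁻¹ * y)) (c⁻¹ * y) := meet_sub_right' _ _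
  have hx1 : sub (c⁻¹ * x) c⁻¹ := l1 hx
  have hy1 : sub (c⁻¹ * y) c⁻¹ := l1 hy
  have hmc : sub (meet (c⁻¹ * x) (c⁻¹ * y)) c⁻¹ := sub_trans' hml hx1
  have hjc : sub (c * meet (c⁻¹ * x) (c⁻¹ * y)) c := phi hmc
  have h1 := m2 hml hx1
  rw [inv_inv, show c * (c⁻¹ * x) = x from by group] at h1
  have h2 := m2 hmr hy1
  rw [inv_inv, show c * (c⁻¹ * y) = y from by group] at h2
  refine show sub x _ ∧ sub y _ ∧ (∀ e, sub x e → sub y e → sub _ e) from ⟨h1, h2, ?_⟩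
  intro e hxe hye
  have hxe' : sub x (meet (c * meet (c⁻¹ * x) (c⁻¹ * y)) e) := sub_meet' h1 hxe
  have hye' : sub y (meet (c * meet (c⁻¹ * x) (c⁻¹ * y)) e) := sub_meet' h2 hye
  have he'c : sub (meet (c * meet (c⁻¹ * x) (c⁻¹ * y)) e) c :=
    sub_trans' (meet_sub_left' _ _) hjc
  have hc1 := m2 hxe' he'c
  have hc2 := m2 hye' he'c
  have hc3 : sub (c⁻¹ * meet (c * meet (c⁻¹ * x) (c⁻¹ * y)) e)
      (meet (c⁻¹ * x) (c⁻¹ * y)) := sub_meet' hc1 hc2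
  have hc4 := m2 hc3 hmc
  rw [inv_inv,
    show c * (c⁻¹ * meet (c * meet (c⁻¹ * x) (c⁻¹ * y)) e)
      = meet (c * meet (c⁻¹ * x) (c⁻¹ * y)) e from by group] at hc4
  exact sub_trans' hc4 (meet_sub_right' _ _)

lemma bounded_hasJoin {x y c : G} (hx : sub x c) (hy : sub y c) : hasJoin x y :=
  show ∃ j, isJoin x y j from ⟨_, bounded_isJoin hx hy⟩

/-- If `a ⊂ b` then `a ∩ (b⁻¹a) = 1`, in an abelian median group with
`g ∩ g⁻¹ = 1` for all `g`. -/
lemma l11 (hcomm : ∀ a b : G, a * b = b * a) (Hm : ∀ g : G, meet g g⁻¹ = 1)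
    {a b : G} (h : sub a b) : meet a (b⁻¹ * a) = 1 := by
  set t := meet a (b⁻¹ * a) with ht
  have t1 : sub t a := meet_sub_left' _ _
  have t2 : sub t (b⁻¹ * a) := meet_sub_right' _ _
  have h3 := m2 t1 h
  have h4 : sub t (b⁻¹ * t) := sub_trans' t2 h3
  have h5 := l1 h4
  rw [show (b⁻¹ * t)⁻¹ * t = b from by
        rw [mul_inv_rev, inv_inv, hcomm t⁻¹ b, mul_assoc, inv_mul_cancel, mul_one]] at h5
  rw [show (b⁻¹ * t)⁻¹ = b * t⁻¹ from by
        rw [mul_inv_rev, inv_inv, hcomm t⁻¹ b]] at h5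
  have h6 : sub a (b * t⁻¹) := sub_trans' h h5
  have h7 : sub t (b * t⁻¹) := sub_trans' t1 h6
  have h9 : sub t ((b * t⁻¹)⁻¹) := by
    rw [mul_inv_rev, inv_inv, hcomm t b⁻¹]
    exact h4
  have h10 : sub t (meet (b * t⁻¹) (b * t⁻¹)⁻¹) := sub_meet' h7 h9
  rw [Hm (b * t⁻¹)] at h10
  exact sub_one' h10

/-- Inversion is monotone (abelian + `g ∩ g⁻¹ = 1`). -/
lemma l12 (hcomm : ∀ a b : G, a * b = b * a) (Hm : ∀ g : G, meet g g⁻¹ = 1)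
    {a b : G} (h : sub a b) : sub a⁻¹ b⁻¹ := by
  have h1 := l3 (l11 hcomm Hm h)
  rwa [show a⁻¹ * (b⁻¹ * a) = b⁻¹ from by
        rw [hcomm b⁻¹ a, ← mul_assoc, inv_mul_cancel, one_mul]] at h1

/-- If `x, y ⊂ c` then `x⁻¹ ∩ y = 1` (abelian + `g ∩ g⁻¹ = 1`). -/
lemma sPrime (hcomm : ∀ a b : G, a * b = b * a) (Hm : ∀ g : G, meet g g⁻¹ = 1)
    {x y c : G} (hx : sub x c) (hy : sub y c) : meet x⁻¹ y = 1 := by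
  have t1 : sub (meet x⁻¹ y) x⁻¹ := meet_sub_left' _ _
  have t2 : sub (meet x⁻¹ y) y := meet_sub_right' _ _
  have h1 : sub (meet x⁻¹ y) c := sub_trans' t2 hy
  have h2 : sub (meet x⁻¹ y) c⁻¹ := sub_trans' t1 (l12 hcomm Hm hx)
  have h3 : sub (meet x⁻¹ y) (meet c c⁻¹) := sub_meet' h1 h2
  rw [Hm c] at h3
  exact sub_one' h3

lemma backward_a2 (hcomm : ∀ a b : G, a * b = b * a)
    (Hm : ∀ g : G, meet g g⁻¹ = 1) : A2 G := by
  intro x y z hxy hxz hyz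
  have hzx : meet z⁻¹ x = 1 := by
    have t1 : sub (meet z⁻¹ x) z⁻¹ := meet_sub_left' _ _
    have t2 : sub (meet z⁻¹ x) x := meet_sub_right' _ _
    have i1 := l12 hcomm Hm t1
    rw [inv_inv] at i1
    have i2 := l12 hcomm Hm t2
    have i3 : sub (meet z⁻¹ x)⁻¹ (meet x⁻¹ z) := sub_meet' i2 i1
    rw [hxz] at i3
    exact inv_eq_one.mp (sub_one' i3)
  have hzy : meet z⁻¹ y = 1 := by
    have t1 : sub (meet z⁻¹ y) z⁻¹ := meet_sub_left' _ _
    have t2 : sub (meet z⁻¹ y) y := meet_sub_right' _ _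
    have i1 := l12 hcomm Hm t1
    rw [inv_inv] at i1
    have i2 := l12 hcomm Hm t2
    have i3 : sub (meet z⁻¹ y)⁻¹ (meet y⁻¹ z) := sub_meet' i2 i1
    rw [hyz] at i3
    exact inv_eq_one.mp (sub_one' i3)
  have hz_xz : sub z (x * z) := by
    have h0 := l3 hzx
    rw [inv_inv] at h0
    rwa [hcomm z x] at h0
  have hz_yz : sub z (y * z) := by
    have h0 := l3 hzy
    rw [inv_inv] at h0
    rwa [hcomm z y] at h0
  have hzg : sub z (meet (x * z) (y * z)) := sub_meet' hz_xz hz_yz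
  have c1 := m2 hzg (meet_sub_left' (x * z) (y * z))
  rw [show (x * z)⁻¹ * z = x⁻¹ from by
        rw [mul_inv_rev, hcomm z⁻¹ x⁻¹, mul_assoc, inv_mul_cancel, mul_one]] at c1
  have d1 := phi c1
  rw [show x * ((x * z)⁻¹ * meet (x * z) (y * z)) = z⁻¹ * meet (x * z) (y * z) from by
        rw [mul_inv_rev, hcomm z⁻¹ x⁻¹]; group] at d1
  have c2 := m2 hzg (meet_sub_right' (x * z) (y * z))
  rw [show (y * z)⁻¹ * z = y⁻¹ from by
        rw [mul_inv_rev, hcomm z⁻¹ y⁻¹, mul_assoc, inv_mul_cancel, mul_one]] at c2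
  have d2 := phi c2
  rw [show y * ((y * z)⁻¹ * meet (x * z) (y * z)) = z⁻¹ * meet (x * z) (y * z) from by
        rw [mul_inv_rev, hcomm z⁻¹ y⁻¹]; group] at d2
  have d3 : sub (z⁻¹ * meet (x * z) (y * z)) (meet x y) := sub_meet' d1 d2
  rw [hxy] at d3
  have d4 := sub_one' d3
  have d5 : meet (x * z) (y * z) = z := by
    have h0 := congrArg (fun w => z * w) d4
    rw [mul_one] at h0
    rwa [show z * (z⁻¹ * meet (x * z) (y * z)) = meet (x * z) (y * z) from by group] at h0
  rw [d5]
  exact sub_refl' z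

lemma backward_perp (hcomm : ∀ a b : G, a * b = b * a)
    (Hm : ∀ g : G, meet g g⁻¹ = 1) (hA1 : A1 G) : PerpGroup G := by
  intro x y h
  have h' : meet x y = 1 ∧ hasJoin x y := h
  have hxy := h'.1
  have hEx : ∃ j, isJoin x y j := h'.2
  obtain ⟨j, hj⟩ := hEx
  have hj' : sub x j ∧ sub y j ∧ ∀ c, sub x c → sub y c → sub j c := hj
  obtain ⟨hxj, hyj, hleast⟩ := hj'
  have hx_inv_y : meet x⁻¹ y = 1 := sPrime hcomm Hm hxj hyj
  have hy_inv_x : meet y⁻¹ x = 1 := sPrime hcomm Hm hyj hxj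
  have hx_xy : sub x (x * y) := by
    have h0 := l3 hx_inv_y
    rwa [inv_inv] at h0
  have hy_xy : sub y (x * y) := by
    have h0 := l3 hy_inv_x
    rw [inv_inv] at h0
    rwa [hcomm y x] at h0
  have hj_xy : sub j (x * y) := hleast _ hx_xy hy_xy
  have c1 := m2 hxj hj_xy
  rw [show (x * y)⁻¹ * x = y⁻¹ from by
        rw [mul_inv_rev, mul_assoc, inv_mul_cancel, mul_one]] at c1
  have c2 := phi c1
  rw [show y * ((x * y)⁻¹ * j) = x⁻¹ * j from by rw [mul_inv_rev]; group] at c2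
  have c3 := m2 hyj hj_xy
  rw [show (x * y)⁻¹ * y = x⁻¹ from by
        rw [mul_inv_rev, hcomm y⁻¹ x⁻¹, mul_assoc, inv_mul_cancel, mul_one]] at c3
  have c4 := phi c3
  rw [show x * ((x * y)⁻¹ * j) = y⁻¹ * j from by
        rw [mul_inv_rev, hcomm y⁻¹ x⁻¹]; group] at c4
  have haj : sub (j⁻¹ * x) j⁻¹ := l1 hxj
  have hbj : sub (j⁻¹ * y) j⁻¹ := l1 hyj
  have hyij : sub y⁻¹ j⁻¹ := l12 hcomm Hm hyj
  have hxij : sub x⁻¹ j⁻¹ := l12 hcomm Hm hxj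
  have ha := hA1 (j⁻¹ * x) y⁻¹ (bounded_hasJoin haj hyij)
    (by rw [mul_inv_rev, inv_inv, inv_inv]; exact c2)
  have hb := hA1 (j⁻¹ * y) x⁻¹ (bounded_hasJoin hbj hxij)
    (by rw [mul_inv_rev, inv_inv, inv_inv]; exact c4)
  have w1 := phi ha
  have w2 := phi hb
  rw [show x * (j⁻¹ * y) = y * (j⁻¹ * x) from by
        rw [hcomm x (j⁻¹ * y), mul_assoc, hcomm y x, hcomm y (j⁻¹ * x), mul_assoc]] at w2
  have w3 : sub (y * (j⁻¹ * x)) (meet x y) := sub_meet' w2 w1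
  rw [hxy] at w3
  have w4 := sub_one' w3
  have h2 : j⁻¹ * x = y⁻¹ := by
    apply mul_left_cancel (a := y)
    rw [w4, mul_inv_cancel]
  have e : x * y = j := by
    have h3 : x = j * y⁻¹ := by rw [← h2]; group
    rw [h3]; group
  exact show sub x (x * y) ∧ sub y (x * y) ∧ (∀ c, sub x c → sub y c → sub (x * y) c) from
    ⟨hx_xy, hy_xy, fun c hxc hyc => by rw [e]; exact hleast c hxc hyc⟩

lemma backward_a4 (hperp : PerpGroup G) (Hm : ∀ g : G, meet g g⁻¹ = 1) : A4 G := by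
  intro x hjoin
  have horth : orth x x⁻¹ := show meet x x⁻¹ = 1 ∧ hasJoin x x⁻¹ from ⟨Hm x, hjoin⟩
  have hj := hperp x x⁻¹ horth
  have hj2 : sub x (x * x⁻¹) ∧ sub x⁻¹ (x * x⁻¹) ∧
      (∀ c, sub x c → sub x⁻¹ c → sub (x * x⁻¹) c) := hj
  have h1 := hj2.1
  rw [mul_inv_cancel] at h1
  exact sub_one' h1

lemma forward_meet (hcomm : ∀ a b : G, a * b = b * a)
    (hA2 : A2 G) (hA4 : A4 G) (x : G) : meet x x⁻¹ = 1 := by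
  set m := meet x x⁻¹ with hm
  have hmx : sub m x := by rw [hm]; exact meet_sub_left' _ _
  have hmxi : sub m x⁻¹ := by rw [hm]; exact meet_sub_right' _ _
  set u := x⁻¹ * m with hu
  set v := x * m with hv
  have huxi : sub u x⁻¹ := by rw [hu]; exact l1 hmx
  have hvx : sub v x := by rw [hv]; exact phi hmxi
  set d := meet u v with hd
  have hdu : sub d u := by rw [hd]; exact meet_sub_left' _ _
  have hdv : sub d v := by rw [hd]; exact meet_sub_right' _ _
  have hdm : sub d m := by
    rw [hm]
    exact sub_meet' (sub_trans' hdv hvx) (sub_trans' hdu huxi)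
  set n := d⁻¹ * m with hn
  have h1 := m2 hdu huxi
  rw [inv_inv, hu, show x * (x⁻¹ * m) = m from by group] at h1
  have h2 := m2 hdv hvx
  rw [hv, show x⁻¹ * (x * m) = m from by group] at h2
  have h3 := m2 hdm h1
  rw [show (x * d)⁻¹ * d = x⁻¹ from by
        rw [mul_inv_rev, hcomm d⁻¹ x⁻¹, mul_assoc, inv_mul_cancel, mul_one]] at h3
  rw [show (x * d)⁻¹ * m = x⁻¹ * n from by
        rw [mul_inv_rev, hcomm d⁻¹ x⁻¹, mul_assoc, ← hn]] at h3
  have h5 := m2 hdm h2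
  rw [show (x⁻¹ * d)⁻¹ * d = x from by
        rw [mul_inv_rev, inv_inv, hcomm d⁻¹ x, mul_assoc, inv_mul_cancel, mul_one]] at h5
  rw [show (x⁻¹ * d)⁻¹ * m = x * n from by
        rw [mul_inv_rev, inv_inv, hcomm d⁻¹ x, mul_assoc, ← hn]] at h5
  have hnxi : sub n x⁻¹ := by
    have h0 := l1 h5
    rwa [show x⁻¹ * (x * n) = n from by group] at h0
  have hnx : sub n x := by
    have h0 := phi h3
    rwa [show x * (x⁻¹ * n) = n from by group] at h0
  have h6 := meet_axiom u v
  rw [← hd] at h6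
  have h6' : sub (u⁻¹ * d) (u⁻¹ * v) := h6
  rw [show u⁻¹ * d = x * n⁻¹ from by
        rw [hu, hn, mul_inv_rev, inv_inv, mul_inv_rev, inv_inv, mul_assoc, hcomm x d,
          ← mul_assoc, hcomm (m⁻¹ * d) x]] at h6'
  rw [show u⁻¹ * v = x * x from by
        rw [hu, hv, mul_inv_rev, inv_inv, hcomm x m, ← mul_assoc, mul_assoc m⁻¹ x m,
          hcomm x m, ← mul_assoc m⁻¹ m x, inv_mul_cancel, one_mul]] at h6'
  have h7 := g1 h6'
  rw [show (x * n⁻¹)⁻¹ * (x * x) = n * x from by group,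
    show (x * n⁻¹)⁻¹ = n * x⁻¹ from by group] at h7
  have hpq : meet (x * n) (x⁻¹ * n) = 1 := by
    rw [hcomm x n, hcomm x⁻¹ n, meet_comm]
    exact h7
  have h8 := g1 h5
  rw [show (x * n)⁻¹ * x = n⁻¹ from by group] at h8
  have h9 := g1 h3
  rw [show (x⁻¹ * n)⁻¹ * x⁻¹ = n⁻¹ from by group] at h9
  have h10 := hA2 (x * n) (x⁻¹ * n) n⁻¹ hpq h8 h9
  rw [show x * n * n⁻¹ = x from by group, show x⁻¹ * n * n⁻¹ = x⁻¹ from by group,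
    ← hm] at h10
  have hnm : sub n m := by rw [hm]; exact sub_meet' hnx hnxi
  have hnn : sub n n⁻¹ := sub_trans' hnm h10
  have hjoin : hasJoin n n⁻¹ :=
    show ∃ j, isJoin n n⁻¹ j from
      ⟨n⁻¹, show sub n n⁻¹ ∧ sub n⁻¹ n⁻¹ ∧ (∀ c, sub n c → sub n⁻¹ c → sub n⁻¹ c) from
        ⟨hnn, sub_refl' _, fun _ _ hc => hc⟩⟩
  have hn1 : n = 1 := hA4 n hjoin
  rw [hn1, inv_one] at h10
  exact sub_one' h10

end Lemma311Aux

/-- Lemma 3.11: an Abelian median group `G` is an A-group iff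
`G` is an A₁-group and `x ∩ x⁻¹ = 1` (equivalently `x ⊂ x²`) for all `x`. -/
theorem abelian_agroup_iff {G : Type*} [MedianGroup G]
    (hcomm : ∀ x y : G, x * y = y * x) :
    AGroup G ↔ (A1 G ∧ ∀ x : G, meet x x⁻¹ = 1) := by
  constructor
  · intro hA
    have hA' : PerpGroup G ∧ A1 G ∧ A2 G ∧ A4 G := hA
    exact ⟨hA'.2.1, fun x => forward_meet hcomm hA'.2.2.1 hA'.2.2.2 x⟩
  · rintro ⟨hA1, Hm⟩
    have hperp : PerpGroup G := backward_perp hcomm Hm hA1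
    exact show PerpGroup G ∧ A1 G ∧ A2 G ∧ A4 G from
      ⟨hperp, hA1, backward_a2 hcomm Hm, backward_a4 hperp Hm⟩


end MedianGroup
end ArtinMedian
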